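/- Define g(x) = (x+1) log₂(x+1) − x log₂ x for x > 0. For fixed η ∈ [0,1] and N > 0, the function F(η₁) = g((η + (1−η)η₁)N) + g((η + (1−η)(1−η₁))N) − g((1−η)η₁ N) − g((1−η)(1−η₁)N) is symmetric under η₁ ↦ 1−η₁, and (being convex on (0,1)) attains its minimum on [0,1] at η₁ = 1/2, with minimum value 2[g((1+η)N/2) − g((1−η)N/2)]. -/

import Mathlib

/-- Entropy of a thermal bosonic state with mean photon number x (in bits),
g(x) = (x+1)log₂(x+1) − x log₂ x. -/
noncomputable def g (x : ℝ) : ℝ := (x + 1) * Real.logb 2 (x + 1) - x * Real.logb 2 x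

/-- The squashed-entanglement objective for the pure-loss channel with squashing
beamsplitter of transmissivity η₁. -/
noncomputable def Fobj (η N η₁ : ℝ) : ℝ :=
  g ((η + (1 - η) * η₁) * N) + g ((η + (1 - η) * (1 - η₁)) * N)
    - g ((1 - η) * η₁ * N) - g ((1 - η) * (1 - η₁) * N)

/-!
Put `a = (1 + η)N/2`, `c = (1 - η)N/2` and `s = (η₁ - 1/2)(1 - η)N`, so that `|s| ≤ c ≤ a`
and `F(η₁) - F(1/2)` is the second difference `g(x + s) + g(x - s) - 2 g(x)` taken at
`x = a` minus the same at `x = c`. That second difference is nondecreasing in `x ≥ |s|`: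
its derivative is the second difference of `g'(x) = log₂(1 + 1/x)`, which is nonnegative
because `g'` is midpoint convex, i.e. `(x + u)(x - u)(x + 1)² ≤ (x + u + 1)(x - u + 1)x²`.
-/

open Real Set

noncomputable def secondDiff (f : ℝ → ℝ) (u x : ℝ) : ℝ := f (x + u) + f (x - u) - 2 * f x

lemma secondDiff_neg (f : ℝ → ℝ) (u x : ℝ) : secondDiff f (-u) x = secondDiff f u x := by
  simp only [secondDiff, sub_neg_eq_add, ← sub_eq_add_neg]
  ring

lemma secondDiff_abs (f : ℝ → ℝ) (u x : ℝ) : secondDiff f |u| x = secondDiff f u x := by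
  rcases abs_choice u with h | h <;> rw [h]
  exact secondDiff_neg f u x

lemma secondDiff_zero (f : ℝ → ℝ) (x : ℝ) : secondDiff f 0 x = 0 := by
  simp only [secondDiff, add_zero, sub_zero]
  ring

theorem monotoneOn_secondDiff {f f' : ℝ → ℝ} {u : ℝ} (hu : 0 ≤ u)
    (hf : ContinuousOn f (Ici 0)) (hf' : ∀ x, 0 < x → HasDerivAt f (f' x) x)
    (hmid : ∀ x, u < x → 2 * f' x ≤ f' (x + u) + f' (x - u)) :
    MonotoneOn (secondDiff f u) (Ici u) := by
  refine monotoneOn_of_hasDerivWithinAt_nonneg (convex_Ici u)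
    (f' := fun x => f' (x + u) + f' (x - u) - 2 * f' x) ?_ ?_ ?_
  · refine ((hf.comp (by fun_prop) ?_).add (hf.comp (by fun_prop) ?_)).sub
      (continuousOn_const.mul (hf.mono ?_)) <;>
    intro x (hx : u ≤ x) <;> simp only [mem_Ici] <;> linarith
  · rw [interior_Ici]
    intro x (hx : u < x)
    have hplus := (hf' (x + u) (by linarith)).comp x ((hasDerivAt_id x).add_const u)
    have hminus := (hf' (x - u) (by linarith)).comp x ((hasDerivAt_id x).sub_const u)
    have hsum := (hplus.add hminus).sub ((hf' x (by linarith)).const_mul 2)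
    rw [mul_one, mul_one] at hsum
    exact hsum.hasDerivWithinAt
  · rw [interior_Ici]
    intro x hx
    linarith [hmid x hx]

lemma two_mul_log_succ_sub_log_le {u x : ℝ} (hux : |u| < x) :
    2 * (log (x + 1) - log x) ≤
      (log (x + u + 1) - log (x + u)) + (log (x - u + 1) - log (x - u)) := by
  obtain ⟨hu₁, hu₂⟩ := abs_lt.mp hux
  have hx : 0 < x := by linarith
  have hplus : 0 < x + u := by linarith
  have hminus : 0 < x - u := by linarith
  have hsucc : 0 < (x + u + 1) * (x - u + 1) := mul_pos (by linarith) (by linarith)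
  have hpoly : (x + u) * (x - u) * (x + 1) ^ 2 ≤ (x + u + 1) * (x - u + 1) * x ^ 2 := by
    nlinarith [sq_nonneg u]
  have hlog := log_le_log (mul_pos (mul_pos hplus hminus) (pow_pos (by linarith) 2)) hpoly
  rw [log_mul (mul_pos hplus hminus).ne' (pow_pos (by linarith) 2).ne',
    log_mul hplus.ne' hminus.ne',
    log_mul hsucc.ne' (pow_pos hx 2).ne', log_mul (by linarith) (by linarith),
    log_pow, log_pow] at hlog
  push_cast at hlog
  linarith

lemma g_eq_div_log_two : g = fun x => ((x + 1) * log (x + 1) - x * log x) / log 2 := by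
  funext x
  simp only [g, logb]
  ring

lemma continuous_g : Continuous g := by
  rw [g_eq_div_log_two]
  exact ((continuous_mul_log.comp (continuous_add_const 1)).sub continuous_mul_log).div_const _

lemma hasDerivAt_g {x : ℝ} (hx : 0 < x) :
    HasDerivAt g ((log (x + 1) - log x) / log 2) x := by
  rw [g_eq_div_log_two]
  have hsucc := (hasDerivAt_mul_log (x := x + 1) (by linarith)).comp x
    ((hasDerivAt_id x).add_const 1)
  exact ((hsucc.sub (hasDerivAt_mul_log hx.ne')).div_const (log 2)).congr_deriv (by ring)

lemma monotoneOn_secondDiff_g {u : ℝ} (hu : 0 ≤ u) : MonotoneOn (secondDiff g u) (Ici u) := by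
  refine monotoneOn_secondDiff hu continuous_g.continuousOn (fun x hx => hasDerivAt_g hx) ?_
  intro x hx
  have hmid := two_mul_log_succ_sub_log_le (abs_lt.mpr ⟨by linarith, hx⟩)
  simpa only [mul_div_assoc, add_div] using
    div_le_div_of_nonneg_right hmid (log_pos one_lt_two).le

lemma Fobj_eq_secondDiff (η N t : ℝ) :
    Fobj η N t = secondDiff g ((t - 1 / 2) * ((1 - η) * N)) ((1 + η) * N / 2)
      - secondDiff g ((t - 1 / 2) * ((1 - η) * N)) ((1 - η) * N / 2)
      + 2 * (g ((1 + η) * N / 2) - g ((1 - η) * N / 2)) := by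
  rw [Fobj, secondDiff, secondDiff,
    show (η + (1 - η) * t) * N = (1 + η) * N / 2 + (t - 1 / 2) * ((1 - η) * N) by ring,
    show (η + (1 - η) * (1 - t)) * N = (1 + η) * N / 2 - (t - 1 / 2) * ((1 - η) * N) by ring,
    show (1 - η) * t * N = (1 - η) * N / 2 + (t - 1 / 2) * ((1 - η) * N) by ring,
    show (1 - η) * (1 - t) * N = (1 - η) * N / 2 - (t - 1 / 2) * ((1 - η) * N) by ring]
  ring

/-- **Symmetry and minimum at η₁ = 1/2**: F is symmetric under η₁ ↦ 1−η₁ and attains its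
minimum on [0,1] at η₁ = 1/2, with value 2[g((1+η)N/2) − g((1−η)N/2)]. -/
theorem Fobj_min_at_half (η N : ℝ) (hη : η ∈ Set.Icc (0 : ℝ) 1) (hN : 0 < N) :
    (∀ η₁ : ℝ, Fobj η N (1 - η₁) = Fobj η N η₁) ∧
    (∀ η₁ ∈ Set.Icc (0 : ℝ) 1, Fobj η N (1 / 2) ≤ Fobj η N η₁) ∧
    Fobj η N (1 / 2) = 2 * (g ((1 + η) * N / 2) - g ((1 - η) * N / 2)) := by
  obtain ⟨hη₀, hη₁⟩ := hη
  have hhalf : Fobj η N (1 / 2) = 2 * (g ((1 + η) * N / 2) - g ((1 - η) * N / 2)) := by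
    rw [Fobj_eq_secondDiff, sub_self, zero_mul, secondDiff_zero, secondDiff_zero]
    ring
  refine ⟨fun t => ?_, fun t ⟨ht₀, ht₁⟩ => ?_, hhalf⟩
  · simp only [Fobj, sub_sub_cancel]
    ring
  · set s := (t - 1 / 2) * ((1 - η) * N)
    have hwidth : 0 ≤ (1 - η) * N := mul_nonneg (by linarith) hN.le
    have hs : |s| ≤ (1 - η) * N / 2 := by
      have ht : |t - 1 / 2| ≤ 1 / 2 := abs_le.mpr ⟨by linarith, by linarith⟩
      rw [abs_mul, abs_of_nonneg hwidth]
      linarith [mul_le_mul_of_nonneg_right ht hwidth]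
    have hca : (1 - η) * N / 2 ≤ (1 + η) * N / 2 := by linarith [mul_nonneg hη₀ hN.le]
    have hmono := monotoneOn_secondDiff_g (abs_nonneg s) hs (hs.trans hca) hca
    rw [secondDiff_abs, secondDiff_abs] at hmono
    rw [hhalf, Fobj_eq_secondDiff]
    linarith
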